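/- arXiv:math/0208048 — 5 statements merged into one kernel-verified Lean document; each statement's English description precedes it below -/
import Mathlib

section
/- Let h be a Cartan subalgebra of g containing a Cartan subalgebra h_r of r, and let h_p be the B-orthocomplement of h_r in h. Then h = h_r ⊕ h_p, h_r = h ∩ r, and h_p = h ∩ p. -/
/-!
Since `h` is nilpotent and contains `h_r`, every element of `h` lies in the zero generalized
weight space of `g` under `h_r`, which is `B`-orthogonal to the positive Fitting component `r₁`
of `r`. As `h_r` is a Cartan subalgebra of `r`, the Fitting decomposition reads `r = h_r ⊕ r₁`,
so an element of `h` orthogonal to `h_r` is orthogonal to all of `r`. Together with the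
nondegeneracy of `B` on `r` this makes `B` nondegenerate on `h_r`; the rest is the modular law.
-/

/-- A Lie algebra is reductive if its radical coincides with its center. -/
def LieAlgebra.IsReductive' (R L : Type*) [CommRing R] [LieRing L] [LieAlgebra R L] : Prop :=
  LieAlgebra.radical R L = LieAlgebra.center R L

open LieModule LieAlgebra

namespace LinearMap.BilinForm

section Lie

variable {R L : Type*} [CommRing R] [LieRing L] [LieAlgebra R L]

lemma lieInvariant_of_apply_lie {B : LinearMap.BilinForm R L}
    (hB : ∀ x y z : L, B ⁅x, y⁆ z = B x ⁅y, z⁆) : B.lieInvariant L := fun x y z ↦ by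
  rw [← lie_skew, map_neg, LinearMap.neg_apply, hB]

lemma lieInvariant.lieSubalgebra {M : Type*} [AddCommGroup M] [Module R M] [LieRingModule L M]
    {B : LinearMap.BilinForm R M} (hB : B.lieInvariant L) (L' : LieSubalgebra R L) :
    B.lieInvariant L' :=
  fun x ↦ hB x

end Lie

section Orthogonal

variable {K V : Type*} [Field K] [AddCommGroup V] [Module K V] {B : LinearMap.BilinForm K V}
  {a h r : Submodule K V}

lemma disjoint_orthogonal_of_inf_orthogonal_le (hr : Disjoint r (B.orthogonal r)) (har : a ≤ r)
    (hah : a ≤ h) (hhr : h ⊓ B.orthogonal a ≤ B.orthogonal r) :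
    Disjoint a (B.orthogonal a) :=
  disjoint_iff_inf_le.mpr <|
    (le_inf (inf_le_left.trans har) ((inf_le_inf_right _ hah).trans hhr)).trans hr.le_bot

lemma inf_eq_of_inf_orthogonal_le (ha : Codisjoint a (B.orthogonal a))
    (hr : Disjoint r (B.orthogonal r)) (har : a ≤ r) (hah : a ≤ h)
    (hhr : h ⊓ B.orthogonal a ≤ B.orthogonal r) : h ⊓ r = a := by
  have hbot : B.orthogonal a ⊓ (h ⊓ r) ≤ ⊥ :=
    (le_inf (inf_le_right.trans inf_le_right)
      ((inf_le_inf_left _ inf_le_left).trans ((inf_comm _ h).le.trans hhr))).trans hr.le_bot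
  calc h ⊓ r = (a ⊔ B.orthogonal a) ⊓ (h ⊓ r) := by rw [ha.eq_top, top_inf_eq]
    _ = a ⊔ B.orthogonal a ⊓ (h ⊓ r) := sup_inf_assoc_of_le _ (le_inf hah har)
    _ = a := sup_eq_left.mpr (hbot.trans bot_le)

end Orthogonal

end LinearMap.BilinForm

namespace LieSubalgebra

variable {R L : Type*} [CommRing R] [LieRing L] [LieAlgebra R L]

lemma map_incl_le (r : LieSubalgebra R L) (H : LieSubalgebra R r) : H.map r.incl ≤ r := by
  rintro _ ⟨y, -, rfl⟩
  exact y.2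

lemma mem_genWeightSpace_zero_of_map_incl_le {r : LieSubalgebra R L} {H : LieSubalgebra R r}
    [LieRing.IsNilpotent H] {h : LieSubalgebra R L} [LieRing.IsNilpotent h]
    (hHh : H.map r.incl ≤ h) {x : L} (hx : x ∈ h) :
    x ∈ genWeightSpace L (0 : H → R) := by
  have hx₀ := (mem_zeroRootSubalgebra R L h x).mp (le_zeroRootSubalgebra R L h hx)
  simp only [mem_genWeightSpace, Pi.zero_apply, zero_smul, sub_zero]
  intro t
  have htoEnd : toEnd R H L t = toEnd R h L ⟨t, hHh ((mem_map _ _ _).mpr ⟨t, t.2, rfl⟩)⟩ := rfl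
  simpa only [htoEnd] using hx₀ _

lemma apply_eq_zero_of_mem_genWeightSpace_zero_of_mem_posFittingComp
    {r : LieSubalgebra R L} (H : LieSubalgebra R r) [LieRing.IsNilpotent H]
    {B : LinearMap.BilinForm R L} (hB : B.lieInvariant H) {x : L}
    (hx : x ∈ genWeightSpace L (0 : H → R)) {z : r} (hz : z ∈ posFittingComp R H r) :
    B x z = 0 :=
  eq_zero_of_mem_genWeightSpace_mem_posFitting R H L hB hx
    (map_posFittingComp_le (r.incl'.restrictLie H) (LieSubmodule.mem_map_of_mem hz))

lemma inf_orthogonal_map_incl_le_orthogonal {K : Type*} [Field K] [LieAlgebra K L]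
    [FiniteDimensional K L] {B : LinearMap.BilinForm K L} (hB : B.lieInvariant L)
    (hBr : B.IsRefl) {r : LieSubalgebra K L} (H : LieSubalgebra K r) [H.IsCartanSubalgebra]
    {h : LieSubalgebra K L} [LieRing.IsNilpotent h] (hHh : H.map r.incl ≤ h) :
    h.toSubmodule ⊓ B.orthogonal (H.map r.incl).toSubmodule ≤ B.orthogonal r.toSubmodule := by
  rintro x ⟨hxh, hxH⟩
  suffices ∀ z : r, B x z = 0 from fun y hy ↦ hBr _ _ (this ⟨y, hy⟩)
  intro z
  obtain ⟨a, ha, b, hb, rfl⟩ := (LieSubmodule.mem_sup _ _ _).mp <|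
    (isCompl_genWeightSpace_zero_posFittingComp K H r).sup_eq_top ▸ LieSubmodule.mem_top z
  have ha' : (a : L) ∈ H.map r.incl := by
    rw [← rootSpace, rootSpace_zero_eq, LieSubalgebra.mem_toLieSubmodule] at ha
    exact (mem_map _ _ _).mpr ⟨a, ha, rfl⟩
  have hx : x ∈ genWeightSpace L (0 : H → K) := mem_genWeightSpace_zero_of_map_incl_le hHh hxh
  rw [AddMemClass.coe_add, map_add, hBr _ _ (hxH _ ha'), zero_add]
  exact apply_eq_zero_of_mem_genWeightSpace_zero_of_mem_posFittingComp H
    ((hB.lieSubalgebra r).lieSubalgebra H) hx hb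

end LieSubalgebra

theorem stmt1_general (g : Type*) [LieRing g] [LieAlgebra ℂ g] [Module.Finite ℂ g]
    (B : LinearMap.BilinForm ℂ g) (hBsymm : B.IsSymm)
    (hBinv : ∀ x y z : g, B ⁅x, y⁆ z = B x ⁅y, z⁆)
    (r : LieSubalgebra ℂ g)
    (hBr : (B.restrict r.toSubmodule).Nondegenerate)
    (p : Submodule ℂ g) (hp : p = B.orthogonal r.toSubmodule)
    -- `h_r` a Cartan subalgebra of `r`, regarded inside `g`:
    (hr' : LieSubalgebra ℂ r) (hhr' : hr'.IsCartanSubalgebra)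
    (hr : LieSubalgebra ℂ g) (hhr : hr = hr'.map r.incl)
    -- `h` a Cartan subalgebra of `g` containing `h_r`:
    (h : LieSubalgebra ℂ g) (hh : h.IsCartanSubalgebra) (hrh : hr ≤ h)
    -- `h_p` the `B`-orthocomplement of `h_r` in `h`:
    (hpsub : Submodule ℂ g)
    (hhp : hpsub = h.toSubmodule ⊓ B.orthogonal hr.toSubmodule) :
    (hr.toSubmodule ⊔ hpsub = h.toSubmodule ∧ hr.toSubmodule ⊓ hpsub = ⊥) ∧
      hr.toSubmodule = h.toSubmodule ⊓ r.toSubmodule ∧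
      hpsub = h.toSubmodule ⊓ p := by
  subst hhr hhp hp
  have hrr : (hr'.map r.incl).toSubmodule ≤ r.toSubmodule := LieSubalgebra.map_incl_le r hr'
  have hrh : (hr'.map r.incl).toSubmodule ≤ h.toSubmodule := hrh
  have hperp := LieSubalgebra.inf_orthogonal_map_incl_le_orthogonal
    (LinearMap.BilinForm.lieInvariant_of_apply_lie hBinv) hBsymm.isRefl hr' hrh
  have hr_disj := (B.isCompl_orthogonal_of_restrict_nondegenerate hBsymm.isRefl hBr).disjoint
  have hc : IsCompl _ _ := (B.isCompl_orthogonal_iff_disjoint hBsymm.isRefl).mpr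
    (LinearMap.BilinForm.disjoint_orthogonal_of_inf_orthogonal_le hr_disj hrr hrh hperp)
  refine ⟨⟨?_, (hc.disjoint.mono_right inf_le_right).eq_bot⟩,
    (LinearMap.BilinForm.inf_eq_of_inf_orthogonal_le hc.codisjoint hr_disj hrr hrh hperp).symm,
    le_antisymm (le_inf inf_le_left hperp) (inf_le_inf_left _ (B.orthogonal_le hrr))⟩
  rw [inf_comm, ← sup_inf_assoc_of_le _ hrh, hc.sup_eq_top, top_inf_eq]

/-- If `h` is a Cartan subalgebra of `g` containing a Cartan subalgebra
`h_r` of `r`, and `h_p` is the `B`-orthocomplement of `h_r` in `h`, then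
`h = h_r ⊕ h_p`, `h_r = h ∩ r` and `h_p = h ∩ p`. -/
theorem stmt1 (g : Type*) [LieRing g] [LieAlgebra ℂ g] [Module.Finite ℂ g]
    [LieAlgebra.IsSemisimple ℂ g]
    (B : LinearMap.BilinForm ℂ g) (hBsymm : B.IsSymm)
    (hBinv : ∀ x y z : g, B ⁅x, y⁆ z = B x ⁅y, z⁆)
    (hBnd : B.Nondegenerate)
    (r : LieSubalgebra ℂ g) (hred : LieAlgebra.IsReductive' ℂ r)
    (hBr : (B.restrict r.toSubmodule).Nondegenerate)
    (p : Submodule ℂ g) (hp : p = B.orthogonal r.toSubmodule)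
    -- `h_r` a Cartan subalgebra of `r`, regarded inside `g`:
    (hr' : LieSubalgebra ℂ r) (hhr' : hr'.IsCartanSubalgebra)
    (hr : LieSubalgebra ℂ g) (hhr : hr = hr'.map r.incl)
    -- `h` a Cartan subalgebra of `g` containing `h_r`:
    (h : LieSubalgebra ℂ g) (hh : h.IsCartanSubalgebra) (hrh : hr ≤ h)
    -- `h_p` the `B`-orthocomplement of `h_r` in `h`:
    (hpsub : Submodule ℂ g)
    (hhp : hpsub = h.toSubmodule ⊓ B.orthogonal hr.toSubmodule) :
    (hr.toSubmodule ⊔ hpsub = h.toSubmodule ∧ hr.toSubmodule ⊓ hpsub = ⊥) ∧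
      hr.toSubmodule = h.toSubmodule ⊓ r.toSubmodule ∧
      hpsub = h.toSubmodule ⊓ p :=
  stmt1_general g B hBsymm hBinv r hBr p hp hr' hhr' hr hhr h hh hrh hpsub hhp
end

section
/- Let m be an isotropic subspace of V, u the Clifford product of a basis of m, and a ∈ C(W) where W ⊆ V is a subspace B-orthogonal to m. Then z·a·u = 0 in C(V) for every z ∈ m. -/
open CliffordAlgebra

/-- With `m` isotropic, `u` the Clifford product of a basis of `m`, and
`a` in the Clifford subalgebra generated by a subspace `W` which is `B`-orthogonal to
`m`, one has `z·a·u = 0` for every `z ∈ m`. -/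
theorem stmt5 (V : Type*) [AddCommGroup V] [Module ℂ V] [FiniteDimensional ℂ V]
    (B : LinearMap.BilinForm ℂ V) (hBsymm : B.IsSymm)
    (Q : QuadraticForm ℂ V) (hQ : Q = B.toQuadraticMap)
    (m : Submodule ℂ V) (hiso : ∀ x ∈ m, ∀ y ∈ m, B x y = 0)
    (n : ℕ) (b : Module.Basis (Fin n) ℂ m)
    (u : CliffordAlgebra Q) (hu : u = (List.ofFn fun i => ι Q ((b i : V))).prod)
    (W : Submodule ℂ V) (horth : ∀ w ∈ W, ∀ z ∈ m, B w z = 0)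
    (a : CliffordAlgebra Q) (ha : a ∈ Algebra.adjoin ℂ (ι Q '' (W : Set V))) :
    ∀ z ∈ m, ι Q z * a * u = 0 := by
  subst hQ
  intro z hz
  -- anticommutation for B-orthogonal pairs
  have swap : ∀ x y : V, B x y = 0 → B y x = 0 →
      ι B.toQuadraticMap x * ι B.toQuadraticMap y
        = - (ι B.toQuadraticMap y * ι B.toQuadraticMap x) := by
    intro x y h1 h2
    have h := ι_mul_ι_add_swap (Q := B.toQuadraticMap) x y
    rw [LinearMap.BilinMap.polar_toQuadraticMap, h1, h2, add_zero, map_zero] at h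
    exact eq_neg_of_add_eq_zero_left h
  -- squares of elements of `m` vanish
  have hsq : ∀ x : V, x ∈ m → ι B.toQuadraticMap x * ι B.toQuadraticMap x = 0 := by
    intro x hx
    rw [ι_sq_scalar, LinearMap.BilinMap.toQuadraticMap_apply, hiso x hx x hx, map_zero]
  -- key: ι of a basis vector kills the product over any list containing its index
  have hzero : ∀ (l : List (Fin n)) (i : Fin n), i ∈ l →
      ι B.toQuadraticMap (b i : V) *
        (l.map fun j => ι B.toQuadraticMap (b j : V)).prod = 0 := by
    intro l
    induction l with
    | nil => intro i hi; simp at hi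
    | cons j t ih =>
      intro i hi
      simp only [List.map_cons, List.prod_cons, ← mul_assoc]
      rcases eq_or_ne i j with rfl | hij
      · rw [hsq _ (b i).2, zero_mul]
      · have hij1 : B (b i : V) (b j : V) = 0 := hiso _ (b i).2 _ (b j).2
        have hij2 : B (b j : V) (b i : V) = 0 := hiso _ (b j).2 _ (b i).2
        have hit : i ∈ t := by
          rcases List.mem_cons.mp hi with h | h
          · exact absurd h hij
          · exact h
        rw [swap _ _ hij1 hij2, neg_mul, mul_assoc, ih i hit, mul_zero, neg_zero]
  -- hence ι z * u = 0
  have hzu : ι B.toQuadraticMap z * u = 0 := by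
    have hzr : z = ∑ i, b.repr ⟨z, hz⟩ i • (b i : V) := by
      have := congrArg (Subtype.val : m → V) (b.sum_repr ⟨z, hz⟩).symm
      simpa [-Module.Basis.sum_repr] using this
    rw [hu, List.ofFn_eq_map, hzr, map_sum, Finset.sum_mul]
    refine Finset.sum_eq_zero fun i _ => ?_
    rw [map_smul, smul_mul_assoc, hzero (List.finRange n) i (List.mem_finRange i),
      smul_zero]
  -- move ι z past a, picking up an involute
  have hmove : ι B.toQuadraticMap z * a = involute a * ι B.toQuadraticMap z := by
    induction ha using Algebra.adjoin_induction with
    | mem x hx =>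
      obtain ⟨w, hw, rfl⟩ := hx
      rw [involute_ι, neg_mul, swap z w (hBsymm.eq w z ▸ horth w hw z hz)
        (horth w hw z hz)]
    | algebraMap r =>
      simp [Algebra.commutes]
    | add x y hx hy ihx ihy =>
      rw [mul_add, ihx, ihy, map_add, add_mul]
    | mul x y hx hy ihx ihy =>
      rw [← mul_assoc, ihx, mul_assoc, ihy, map_mul, mul_assoc]
  rw [hmove, mul_assoc, hzu, mul_zero]
end

section
/- Let m be a B-isotropic subspace of V with Clifford product of a basis u, and let W ⊆ V be a subspace orthogonal to m with m ∩ W = 0. Then the map C(W) → C(V)·u, a ↦ a·u, is injective. -/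
open CliffordAlgebra

section Aux

variable {V : Type*} [AddCommGroup V] [Module ℂ V] (Q : QuadraticForm ℂ V)

/-- Leibniz rule for left contraction. -/
lemma aux_contract_mul (d : Module.Dual ℂ V) (x y : CliffordAlgebra Q) :
    contractLeft d (x * y) =
      contractLeft d x * y + involute x * contractLeft d y := by
  induction x using CliffordAlgebra.induction generalizing y with
  | algebraMap r =>
      simp [Algebra.smul_def, contractLeft_algebraMap_mul]
  | ι v =>
      rw [contractLeft_ι_mul, contractLeft_ι, involute_ι, Algebra.smul_def, neg_mul,
        sub_eq_add_neg]
  | mul x₁ x₂ ih₁ ih₂ =>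
      have hinv : involute (Q := Q) (x₁ * x₂) = involute x₁ * involute x₂ := map_mul _ _ _
      rw [mul_assoc, ih₁, ih₂, hinv, ih₁ x₂]
      noncomm_ring
  | add x₁ x₂ ih₁ ih₂ =>
      simp only [add_mul, ih₁, ih₂, map_add]
      abel

/-- Contraction by a functional vanishing on `W` kills the subalgebra generated by `ι '' W`. -/
lemma aux_contract_adjoin (W : Submodule ℂ V) (d : Module.Dual ℂ V)
    (hd : ∀ w ∈ W, d w = 0) {x : CliffordAlgebra Q}
    (hx : x ∈ Algebra.adjoin ℂ (ι Q '' (W : Set V))) :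
    contractLeft d x = 0 := by
  induction hx using Algebra.adjoin_induction with
  | mem x hxm =>
      obtain ⟨w, hw, rfl⟩ := hxm
      rw [contractLeft_ι, hd w hw, map_zero]
  | algebraMap r => exact contractLeft_algebraMap Q d r
  | add x y hx hy ihx ihy => rw [map_add, ihx, ihy, add_zero]
  | mul x y hx hy ihx ihy => rw [aux_contract_mul, ihx, ihy, zero_mul, mul_zero, add_zero]

/-- The subalgebra generated by `ι '' W` is closed under `involute`. -/
lemma aux_involute_adjoin (W : Submodule ℂ V) {x : CliffordAlgebra Q}
    (hx : x ∈ Algebra.adjoin ℂ (ι Q '' (W : Set V))) :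
    involute x ∈ Algebra.adjoin ℂ (ι Q '' (W : Set V)) := by
  induction hx using Algebra.adjoin_induction with
  | mem x hxm =>
      obtain ⟨w, hw, rfl⟩ := hxm
      rw [involute_ι]
      exact neg_mem (Algebra.subset_adjoin ⟨w, hw, rfl⟩)
  | algebraMap r =>
      rw [AlgHom.commutes]; exact algebraMap_mem _ r
  | add x y hx hy ihx ihy => rw [map_add]; exact add_mem ihx ihy
  | mul x y hx hy ihx ihy => rw [map_mul]; exact mul_mem ihx ihy

/-- Contraction by a functional vanishing on all vectors of a list kills the product. -/
lemma aux_contract_prod (d : Module.Dual ℂ V) (l : List V) (h : ∀ v ∈ l, d v = 0) :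
    contractLeft d (l.map (ι Q)).prod = 0 := by
  induction l with
  | nil => simpa using contractLeft_one Q d
  | cons v t ih =>
      rw [List.map_cons, List.prod_cons, contractLeft_ι_mul,
        h v List.mem_cons_self, ih fun w hw => h w (List.mem_cons_of_mem v hw)]
      simp

end Aux

/-- With `m` isotropic, `u` the Clifford product of a basis of `m`, and
`W ⊆ V` a subspace orthogonal to `m` with `W ∩ m = 0`, the map `C(W) → C(V)·u`,
`a ↦ a·u`, is injective. -/
theorem stmt6 (V : Type*) [AddCommGroup V] [Module ℂ V] [FiniteDimensional ℂ V]
    (B : LinearMap.BilinForm ℂ V) (hBsymm : B.IsSymm)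
    (Q : QuadraticForm ℂ V) (hQ : Q = B.toQuadraticMap)
    (m : Submodule ℂ V) (hiso : ∀ x ∈ m, ∀ y ∈ m, B x y = 0)
    (n : ℕ) (b : Module.Basis (Fin n) ℂ m)
    (u : CliffordAlgebra Q) (hu : u = (List.ofFn fun i => ι Q ((b i : V))).prod)
    (W : Submodule ℂ V) (horth : ∀ w ∈ W, ∀ z ∈ m, B w z = 0)
    (hWm : W ⊓ m = ⊥) :
    Function.Injective
      (fun a : Algebra.adjoin ℂ (ι Q '' (W : Set V)) => (a : CliffordAlgebra Q) * u) := by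
  classical
  -- Step 1: construct dual functionals `f i` with `f i (b j) = δ_{ij}` and `f i = 0` on `W`.
  have hf : ∀ i : Fin n, ∃ f : Module.Dual ℂ V,
      f (b i : V) = 1 ∧ (∀ w ∈ W, f w = 0) ∧ ∀ j : Fin n, j ≠ i → f (b j : V) = 0 := by
    intro i
    set p : Submodule ℂ V :=
      W ⊔ Submodule.span ℂ ((fun j : Fin n => (b j : V)) '' {j | j ≠ i}) with hp
    have hbi : (b i : V) ∉ p := by
      intro hmem
      rw [hp, Submodule.mem_sup] at hmem
      obtain ⟨w, hw, y, hy, hsum⟩ := hmem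
      have hym : y ∈ m := by
        refine Submodule.span_le.mpr ?_ hy
        rintro _ ⟨j, -, rfl⟩
        exact (b j).2
      have hwm : w ∈ W ⊓ m := by
        refine ⟨hw, ?_⟩
        rw [eq_sub_of_add_eq hsum]
        exact sub_mem (b i).2 hym
      rw [hWm, Submodule.mem_bot] at hwm
      have hyeq : (b i : V) = y := by rw [← hsum, hwm, zero_add]
      -- contradict linear independence of `b` (as vectors of `V`)
      have hli : LinearIndependent ℂ (fun j : Fin n => (b j : V)) :=
        b.linearIndependent.map' m.subtype (Submodule.ker_subtype m)
      have hnot := hli.notMem_span_image (s := {j | j ≠ i}) (x := i) (by simp)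
      exact hnot (hyeq ▸ hy)
    obtain ⟨g, hg0, hgmap⟩ := p.exists_dual_map_eq_bot_of_notMem hbi inferInstance
    have hker : ∀ v ∈ p, g v = 0 := by
      intro v hv
      have : g v ∈ p.map g := Submodule.mem_map_of_mem hv
      rwa [hgmap, Submodule.mem_bot] at this
    refine ⟨(g (b i : V))⁻¹ • g, ?_, ?_, ?_⟩
    · simp [inv_mul_cancel₀ hg0]
    · intro w hw
      simp [hker w (Submodule.mem_sup_left hw)]
    · intro j hj
      have : g (b j : V) = 0 := by
        refine hker _ (Submodule.mem_sup_right ?_)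
        exact Submodule.subset_span ⟨j, hj, rfl⟩
      simp [this]
  choose f hf1 hfW hf0 using hf
  -- Step 2: main peeling induction.
  have main : ∀ (l : List (Fin n)), l.Nodup →
      ∀ x ∈ Algebra.adjoin ℂ (ι Q '' (W : Set V)),
        x * ((l.map fun i => ι Q (b i : V)).prod) = 0 → x = 0 := by
    intro l
    induction l with
    | nil =>
        intro _ x _ hx0
        simpa using hx0
    | cons i t ih =>
        intro hnd x hxadj hx0
        have hnd' := List.nodup_cons.mp hnd
        rw [List.map_cons, List.prod_cons] at hx0
        have h1 : contractLeft (f i) (x * (ι Q (b i : V) *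
            ((t.map fun j => ι Q (b j : V))).prod)) = 0 := by
          rw [hx0, map_zero]
        rw [aux_contract_mul, aux_contract_adjoin Q W (f i) (hfW i) hxadj,
          zero_mul, zero_add, contractLeft_ι_mul, hf1 i] at h1
        have h2 : contractLeft (f i) ((t.map fun j => ι Q (b j : V))).prod = 0 := by
          have : (t.map fun j => ι Q (b j : V)) = ((t.map fun j => (b j : V)).map (ι Q)) := by
            simp [List.map_map, Function.comp]
          rw [this]
          refine aux_contract_prod Q (f i) _ ?_
          intro v hv
          rw [List.mem_map] at hv
          obtain ⟨j, hjt, rfl⟩ := hv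
          exact hf0 i j (fun h => hnd'.1 (h ▸ hjt))
        rw [h2, mul_zero, sub_zero, one_smul] at h1
        have hinv : involute x = 0 :=
          ih hnd'.2 (involute x) (aux_involute_adjoin Q W hxadj) h1
        have := congrArg (involute (Q := Q)) hinv
        rwa [involute_involute, map_zero] at this
  -- Step 3: conclude.
  intro a₁ a₂ h
  simp only at h
  have hdiff : ((a₁ : CliffordAlgebra Q) - (a₂ : CliffordAlgebra Q)) * u = 0 := by
    rw [sub_mul, h, sub_self]
  have hmem : ((a₁ : CliffordAlgebra Q) - (a₂ : CliffordAlgebra Q)) ∈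
      Algebra.adjoin ℂ (ι Q '' (W : Set V)) := sub_mem a₁.2 a₂.2
  have : ((a₁ : CliffordAlgebra Q) - (a₂ : CliffordAlgebra Q)) = 0 := by
    refine main (List.finRange n) (List.nodup_finRange n) _ hmem ?_
    rw [← hdiff, hu, List.ofFn_eq_map]
  have := sub_eq_zero.mp this
  exact Subtype.ext this
end

section
/- Let ρ_0 be half the sum of the positive roots vanishing on h_r, ρ_1 half the sum of positive roots whose restriction to h_r lies in Γ_+, and ρ_2 half the sum of the remaining positive roots. Then the element y_{ρ_2} ∈ h_p corresponding to ρ_2|h_p under the form B is zero, i.e. ρ_2 vanishes on h_p. -/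
/-- With `Δ_+^2` the set of positive roots whose restriction to `h_r`
lies neither in `Γ_+` nor is zero, the half sum `ρ_2` of the elements of `Δ_+^2`
vanishes on `h_p` (equivalently, the `B`-dual element `y_{ρ_2} ∈ h_p` is zero). -/
theorem stmt10 (g : Type*) [LieRing g] [LieAlgebra ℂ g] [Module.Finite ℂ g]
    [LieAlgebra.IsSemisimple ℂ g]
    (B : LinearMap.BilinForm ℂ g) (hBsymm : B.IsSymm)
    (hBinv : ∀ x y z : g, B ⁅x, y⁆ z = B x ⁅y, z⁆)
    (hBnd : B.Nondegenerate)
    (r : LieSubalgebra ℂ g) (hred : LieAlgebra.IsReductive' ℂ r)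
    (hBr : (B.restrict r.toSubmodule).Nondegenerate)
    (p : Submodule ℂ g) (hp : p = B.orthogonal r.toSubmodule)
    (hcompl : IsCompl r.toSubmodule p)
    (hbr : ∀ x ∈ r, ∀ y ∈ p, ⁅x, y⁆ ∈ p)
    -- compatible Cartan subalgebras `h_r ⊆ h`, `h_p = h ∩ p`:
    (hr' : LieSubalgebra ℂ r) (hhr' : hr'.IsCartanSubalgebra)
    (hr : LieSubalgebra ℂ g) (hhr : hr = hr'.map r.incl)
    (h : LieSubalgebra ℂ g) (hh : h.IsCartanSubalgebra) (hrh : hr ≤ h)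
    (hpsub : Submodule ℂ g) (hhp : hpsub = h.toSubmodule ⊓ p)
    -- the hyperbolic element `f_r ∈ h_r` defining the parabolic and positivity:
    (fr : g) (hfr : fr ∈ hr)
    (hfrcent : ∀ w : g, ⁅fr, w⁆ = 0 → ∀ x ∈ hr, ⁅x, w⁆ = 0)
    -- `Δ_+^2`: a set of roots of `(h,g)`, nonnegative (and real) on `f_r`, whose
    -- restrictions to `h_r` are nonzero and do not lie in `Γ_+`:
    (Δ2 : Finset (Module.Dual ℂ g))
    (hroots : ∀ φ ∈ Δ2, ∃ e : g, e ≠ 0 ∧ ∀ z ∈ h, ⁅z, e⁆ = φ z • e)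
    (hpos : ∀ φ ∈ Δ2, ∃ t : ℝ, 0 ≤ t ∧ φ fr = (t : ℂ))
    (hφhr : ∀ φ ∈ Δ2, ∃ x ∈ hr, φ x ≠ 0)
    (hφΓ : ∀ φ ∈ Δ2,
      ¬ ((∃ w ∈ p, w ≠ 0 ∧ ∀ x ∈ hr, ⁅x, w⁆ = φ x • w) ∧ ∃ t : ℝ, 0 < t ∧ φ fr = (t : ℂ)))
    -- `ρ_2` is half the sum of the elements of `Δ_+^2`:
    (ρ2 : Module.Dual ℂ g) (hρ2 : ρ2 = (1/2 : ℂ) • ∑ φ ∈ Δ2, φ) :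
    ∀ y ∈ hpsub, ρ2 y = 0 := by
  -- `hr ≤ r` as subsets of `g`:
  have hrr : ∀ x ∈ hr, x ∈ r := by
    intro x hx
    rw [hhr] at hx
    obtain ⟨y, -, rfl⟩ := hx
    exact y.2
  have hdisj : ∀ v : g, v ∈ r.toSubmodule → v ∈ p → v = 0 := by
    intro v hv1 hv2
    have : v ∈ r.toSubmodule ⊓ p := ⟨hv1, hv2⟩
    rwa [hcompl.inf_eq_bot, Submodule.mem_bot] at this
  -- Key: each root in Δ2 vanishes on h ⊓ p.
  have key : ∀ φ ∈ Δ2, ∀ y ∈ hpsub, φ y = 0 := by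
    intro φ hφ y hy
    rw [hhp] at hy
    obtain ⟨hy1, hy2⟩ := hy
    obtain ⟨e, he0, herot⟩ := hroots φ hφ
    -- decompose e = er + ep with er ∈ r, ep ∈ p
    have hmem : e ∈ r.toSubmodule ⊔ p := by rw [hcompl.sup_eq_top]; trivial
    obtain ⟨er, hermem, ep, hepmem, hsum⟩ := Submodule.mem_sup.mp hmem
    -- ep is a root vector for hr
    have hbr_p : ∀ x ∈ hr, ⁅x, ep⁆ = φ x • ep := by
      intro x hx
      have hxr : x ∈ r := hrr x hx
      have hxh : x ∈ h := hrh hx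
      have h1 : ⁅x, er⁆ + ⁅x, ep⁆ = φ x • er + φ x • ep := by
        rw [← lie_add, ← smul_add, hsum]
        exact herot x hxh
      have hd1 : ⁅x, ep⁆ - φ x • ep ∈ p := by
        exact p.sub_mem (hbr x hxr ep hepmem) (p.smul_mem _ hepmem)
      have hd2 : ⁅x, ep⁆ - φ x • ep ∈ r.toSubmodule := by
        have heq : ⁅x, ep⁆ - φ x • ep = φ x • er - ⁅x, er⁆ := by
          linear_combination (norm := abel_nf) h1
        rw [heq]
        exact r.toSubmodule.sub_mem (r.toSubmodule.smul_mem _ hermem)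
          ((r : LieSubalgebra ℂ g).lie_mem hxr hermem)
      exact sub_eq_zero.mp (hdisj _ hd2 hd1)
    by_cases hep : ep = 0
    · -- e ∈ r
      have her : e ∈ r := by
        rw [← hsum, hep, add_zero]; exact hermem
      have h1 : ⁅y, e⁆ = φ y • e := herot y hy1
      have h2 : ⁅e, y⁆ ∈ p := hbr e her y hy2
      have h3 : φ y • e ∈ p := by
        rw [← h1, ← lie_skew]
        exact p.neg_mem h2
      have h4 : φ y • e ∈ r.toSubmodule := r.toSubmodule.smul_mem _ her
      have h5 : φ y • e = 0 := hdisj _ h4 h3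
      exact (smul_eq_zero.mp h5).resolve_right he0
    · exfalso
      have hfr0 : φ fr = 0 := by
        obtain ⟨t, ht0, hteq⟩ := hpos φ hφ
        rcases ht0.lt_or_eq with hlt | hzero
        · exact absurd ⟨⟨ep, hepmem, hep, hbr_p⟩, t, hlt, hteq⟩ (hφΓ φ hφ)
        · rw [hteq, ← hzero]; norm_num
      have hlie : ⁅fr, e⁆ = 0 := by
        rw [herot fr (hrh hfr), hfr0, zero_smul]
      obtain ⟨x, hx, hxne⟩ := hφhr φ hφ
      apply hxne
      have hz := hfrcent e hlie x hx
      rw [herot x (hrh hx)] at hz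
      exact (smul_eq_zero.mp hz).resolve_right he0
  intro y hy
  rw [hρ2]
  simp only [LinearMap.smul_apply, LinearMap.coe_sum, Finset.sum_apply, smul_eq_mul]
  rw [Finset.sum_eq_zero (fun φ hφ => key φ hφ y hy), mul_zero]
end

section
/- For x ∈ h_r, the element ν_*(x) ∈ ∧²p is given by ν_*(x) = (1/2) Σ_{i ∈ I^+} γ_i(x) b_i ∧ d_i, where {b_i}_{i∈I^+} is a basis of p^+ consisting of ad h_r weight vectors of weights γ_i and {d_i} is the B-dual basis of p^−. -/
noncomputable instance : Invertible (2 : ℂ) := invertibleOfNonzero two_ne_zero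

open CliffordAlgebra

theorem QuadraticMap.polar_eq_two_mul_associated {R M : Type*} [CommRing R] [Invertible (2 : R)]
    [AddCommGroup M] [Module R M] (Q : QuadraticForm R M) (x y : M) :
    polar Q x y = 2 * associated Q x y := by
  rw [← polarBilin_apply_apply, ← two_nsmul_associated R, LinearMap.smul_apply,
    LinearMap.smul_apply, two_nsmul, two_mul]

theorem sub_algebraMap_lie {R A : Type*} [CommRing R] [Ring A] [Algebra R A] (a : R) (x z : A) :
    ⁅x - algebraMap R A a, z⁆ = ⁅x, z⁆ := by
  rw [Ring.lie_def, Ring.lie_def, sub_mul, mul_sub, Algebra.commutes, sub_sub_sub_cancel_right]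

namespace LinearMap.BilinForm

theorem restrict_orthogonal_nondegenerate {K V : Type*} [Field K] [AddCommGroup V] [Module K V]
    [FiniteDimensional K V] {B : LinearMap.BilinForm K V} (hB : B.Nondegenerate)
    (hB₀ : B.IsRefl) {W : Submodule K V} (hW : (B.restrict W).Nondegenerate) :
    (B.restrict (B.orthogonal W)).Nondegenerate := by
  rw [restrict_nondegenerate_iff_isCompl_orthogonal hB₀, orthogonal_orthogonal hB hB₀]
  exact (isCompl_orthogonal_of_restrict_nondegenerate hB₀ hW).symm

theorem sum_apply_smul_dualBasis {K V κ : Type*} [Field K] [AddCommGroup V] [Module K V]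
    [Fintype κ] [DecidableEq κ] {B : LinearMap.BilinForm K V} (hB : B.Nondegenerate)
    (b : Module.Basis κ K V) (v : V) :
    ∑ k, B v (b k) • B.dualBasis hB b k = v := by
  simpa using (B.dualBasis hB b).sum_repr v

open Submodule in
theorem apply_eq_sum_of_weight_vectors {R M : Type*} [CommRing R]
    [AddCommGroup M] [Module R M] {B : LinearMap.BilinForm R M} (hB : B.IsSymm)
    {D : Module.End R M} (hD : ∀ u v, B (D u) v = -B u (D v)) {n : ℕ} {b d : Fin n → M}
    {c : Fin n → R} (hb : ∀ i, D (b i) = c i • b i) (hd : ∀ i, D (d i) = -c i • d i)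
    (hbd : ∀ i j, B (b i) (d j) = if i = j then 1 else 0) (hbb : ∀ i j, B (b i) (b j) = 0)
    (hdd : ∀ i j, B (d i) (d j) = 0) {M₀ : Submodule R M} (hM₀ : ∀ z ∈ M₀, D z = 0)
    (hspan : span R (Set.range b ∪ Set.range d) ⊔ M₀ = ⊤) (y : M) :
    D y = ∑ i, c i • (B (d i) y • b i - B (b i) y • d i) := by
  let T : Module.End R M := ∑ i, c i • ((B (d i)).smulRight (b i) - (B (b i)).smulRight (d i))
  have hT (y : M) : T y = ∑ i, c i • (B (d i) y • b i - B (b i) y • d i) := by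
    simp [T]
  rw [← hT]
  have hspan' : span R (Set.range b ∪ Set.range d ∪ M₀) = ⊤ := by
    rw [span_union, span_eq, hspan]
  refine LinearMap.congr_fun (LinearMap.ext_on hspan' ?_) y
  rintro y ((⟨j, rfl⟩ | ⟨j, rfl⟩) | hy)
  · have hdb (i : Fin n) : B (d i) (b j) = if j = i then 1 else 0 := by rw [← hB.eq, hbd]
    simp [hT, hb, hdb, hbb]
  · simp [hT, hd, hbd, hdd]
  · have hcd (i : Fin n) : c i * B (d i) y = 0 := by
      simpa [hd, hM₀ y hy] using hD (d i) y
    have hcb (i : Fin n) : c i * B (b i) y = 0 := by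
      simpa [hb, hM₀ y hy] using hD (b i) y
    simp [hT, hM₀ y hy, smul_sub, smul_smul, hcd, hcb]

end LinearMap.BilinForm

namespace CliffordAlgebra

section CommRing

variable {R M : Type*} [CommRing R] [AddCommGroup M] [Module R M] (Q : QuadraticForm R M)

theorem lie_ι_mul_ι_ι (a b y : M) :
    ⁅ι Q a * ι Q b, ι Q y⁆ =
      QuadraticMap.polar Q b y • ι Q a - QuadraticMap.polar Q a y • ι Q b := by
  rw [Ring.lie_def, mul_assoc, ι_mul_ι_comm b y, mul_sub, ← mul_assoc, ι_mul_ι_comm a y,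
    sub_mul, ← Algebra.commutes, ← Algebra.smul_def, ← Algebra.smul_def, ← mul_assoc]
  abel

variable [Invertible (2 : R)]

noncomputable def wedge (a b : M) : CliffordAlgebra Q :=
  (equivExterior Q).symm (ExteriorAlgebra.ι R a * ExteriorAlgebra.ι R b)

theorem wedge_eq (a b : M) :
    wedge Q a b = ι Q a * ι Q b - algebraMap R _ (QuadraticMap.associated Q a b) := by
  change (equivExterior Q).symm (ι (0 : QuadraticForm R M) a * ι 0 b) = _
  rw [equivExterior, changeFormEquiv_symm, changeFormEquiv_apply, changeForm_ι_mul_ι]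
  simp

theorem equivExterior_wedge_mem (a b : M) : equivExterior Q (wedge Q a b) ∈ ⋀[R]^2 M := by
  rw [wedge, LinearEquiv.apply_symm_apply, ExteriorAlgebra.exteriorPower, pow_two]
  exact Submodule.mul_mem_mul (LinearMap.mem_range_self _ _) (LinearMap.mem_range_self _ _)

theorem lie_wedge_ι (a b y : M) :
    ⁅wedge Q a b, ι Q y⁆ =
      (2 : R) • ι Q (QuadraticMap.associated Q b y • a - QuadraticMap.associated Q a y • b) := by
  rw [wedge_eq, sub_algebraMap_lie, lie_ι_mul_ι_ι, QuadraticMap.polar_eq_two_mul_associated,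
    QuadraticMap.polar_eq_two_mul_associated, map_sub, map_smul, map_smul, smul_sub, mul_smul,
    mul_smul]

variable {κ : Type*} [Fintype κ] (c : κ → R) (a b : κ → M)

theorem equivExterior_smul_sum_wedge_mem (t : R) :
    equivExterior Q (t • ∑ i, c i • wedge Q (a i) (b i)) ∈ ⋀[R]^2 M := by
  simp only [map_smul, map_sum]
  exact Submodule.smul_mem _ _ (Submodule.sum_mem _ fun i _ =>
    Submodule.smul_mem _ _ (equivExterior_wedge_mem Q _ _))

theorem lie_invOf_two_smul_sum_wedge_ι (y : M) :
    ⁅⅟(2 : R) • ∑ i, c i • wedge Q (a i) (b i), ι Q y⁆ =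
      ι Q (∑ i, c i • (QuadraticMap.associated Q (b i) y • a i -
        QuadraticMap.associated Q (a i) y • b i)) := by
  simp only [Ring.lie_def, Finset.sum_mul, Finset.mul_sum, smul_mul_assoc, mul_smul_comm,
    ← Finset.sum_sub_distrib, ← smul_sub]
  simp only [← Ring.lie_def, lie_wedge_ι, map_sum, map_smul, Finset.smul_sum, smul_comm (c _),
    invOf_smul_smul]

end CommRing

section Field

variable {K M : Type*} [Field K] [Invertible (2 : K)] [AddCommGroup M] [Module K M]
  {Q : QuadraticForm K M}

theorem sum_ι_dualBasis_mul_lie (hQ : (QuadraticMap.associated Q).Nondegenerate) {κ : Type*}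
    [Fintype κ] [DecidableEq κ] (b : Module.Basis κ K M) {c : CliffordAlgebra Q}
    (hc : equivExterior Q c ∈ ⋀[K]^2 M) :
    ∑ k, ι Q (LinearMap.BilinForm.dualBasis _ hQ b k) * ⁅c, ι Q (b k)⁆ = -(4 : K) • c := by
  set db := LinearMap.BilinForm.dualBasis _ hQ b
  have hdb (v w : M) :
      ∑ k, ι Q (db k) * ι Q (QuadraticMap.associated Q v (b k) • w) = ι Q v * ι Q w := by
    simp only [map_smul, mul_smul_comm, ← smul_mul_assoc, ← Finset.sum_mul]
    simp only [← map_smul]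
    rw [← map_sum, LinearMap.BilinForm.sum_apply_smul_dualBasis]
  rw [← (equivExterior Q).symm_apply_apply c]
  generalize equivExterior Q c = ω at hc
  rw [ExteriorAlgebra.exteriorPower, pow_two] at hc
  refine Submodule.mul_induction_on hc ?_ ?_
  · rintro _ ⟨u, rfl⟩ _ ⟨v, rfl⟩
    change ∑ k, ι Q (db k) * ⁅wedge Q u v, ι Q (b k)⁆ = -(4 : K) • wedge Q u v
    simp_rw [lie_wedge_ι, mul_smul_comm, ← Finset.smul_sum, map_sub, mul_sub,
      Finset.sum_sub_distrib, hdb, ι_mul_ι_comm v u, QuadraticMap.polar_comm Q v u,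
      QuadraticMap.polar_eq_two_mul_associated, wedge_eq, Algebra.algebraMap_eq_smul_one]
    module
  · intro x y hx hy
    simp only [Ring.lie_def] at hx hy ⊢
    simp only [map_add, add_mul, mul_add, add_sub_add_comm, Finset.sum_add_distrib, hx, hy,
      smul_add]

theorem eq_of_forall_lie_ι_eq [FiniteDimensional K M]
    (hQ : (QuadraticMap.associated Q).Nondegenerate) {c₁ c₂ : CliffordAlgebra Q}
    (hc₁ : equivExterior Q c₁ ∈ ⋀[K]^2 M) (hc₂ : equivExterior Q c₂ ∈ ⋀[K]^2 M)
    (h : ∀ y, ⁅c₁, ι Q y⁆ = ⁅c₂, ι Q y⁆) : c₁ = c₂ := by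
  have h4 : -(4 : K) ≠ 0 := by
    rw [neg_ne_zero, show (4 : K) = 2 * 2 by norm_num]
    exact mul_ne_zero (Invertible.ne_zero 2) (Invertible.ne_zero 2)
  apply smul_right_injective _ h4
  simp only [← sum_ι_dualBasis_mul_lie hQ (Module.finBasis K M) hc₁,
    ← sum_ι_dualBasis_mul_lie hQ (Module.finBasis K M) hc₂, h]

end Field

end CliffordAlgebra

theorem stmt14_general (g : Type*) [LieRing g] [LieAlgebra ℂ g] [Module.Finite ℂ g]
    (B : LinearMap.BilinForm ℂ g) (hBsymm : B.IsSymm)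
    (hBinv : ∀ x y z : g, B ⁅x, y⁆ z = B x ⁅y, z⁆)
    (hBnd : B.Nondegenerate)
    (r : LieSubalgebra ℂ g)
    (hBr : (B.restrict r.toSubmodule).Nondegenerate)
    (p : Submodule ℂ g) (hp : p = B.orthogonal r.toSubmodule)
    (hbr : ∀ (x : r) (y : p), ⁅(x : g), (y : g)⁆ ∈ p)
    (Q : QuadraticForm ℂ p) (hQ : Q = (B.restrict p).toQuadraticMap)
    -- the Cartan subalgebra `h_r` of `r`, inside `g`:
    (hr : LieSubalgebra ℂ g)
    -- weight bases `{b_i}` of `p^+` and `{d_i}` of `p^-`, `B`-dual to each other: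
    (n : ℕ) (bb dd : Fin n → p) (γ : Fin n → Module.Dual ℂ g)
    (hwb : ∀ x ∈ hr, ∀ i, ⁅x, (bb i : g)⁆ = γ i x • (bb i : g))
    (hwd : ∀ x ∈ hr, ∀ i, ⁅x, (dd i : g)⁆ = -(γ i x) • (dd i : g))
    (hdual : ∀ i j, B (bb i) (dd j) = if i = j then 1 else 0)
    (hbiso : ∀ i j, B (bb i) (bb j) = 0) (hdiso : ∀ i j, B (dd i) (dd j) = 0)
    -- the rest of `p` is the centralizer `p^0` of `h_r` in `p`:
    (p0 : Submodule ℂ p)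
    (hp0 : ∀ z ∈ p0, ∀ x ∈ hr, ⁅x, (z : g)⁆ = 0)
    (hspan : (⊤ : Submodule ℂ p) =
      Submodule.span ℂ (Set.range bb ∪ Set.range dd) ⊔ p0)
    -- the spin homomorphism `ν_*` characterized by `[x,y] = [ν_*(x), y]`:
    (ν : r →ₗ[ℂ] CliffordAlgebra Q)
    (hν2 : ∀ x : r, equivExterior Q (ν x) ∈
        (LinearMap.range (ExteriorAlgebra.ι ℂ : p →ₗ[ℂ] ExteriorAlgebra ℂ p)) ^ 2)
    (hνdef : ∀ (x : r) (y : p), ι Q ⟨⁅(x : g), (y : g)⁆, hbr x y⟩ = ⁅ν x, ι Q y⁆) :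
    ∀ (x : g) (hxr : x ∈ r), x ∈ hr →
      ν ⟨x, hxr⟩ = (1/2 : ℂ) • ∑ i, γ i x • (ι Q (bb i) * ι Q (dd i) - 1) := by
  intro x hxr hx
  have hassoc : QuadraticMap.associated Q = B.restrict p :=
    hQ ▸ QuadraticMap.associated_left_inverse ℂ (hBsymm.restrict p).eq
  have hnd : (QuadraticMap.associated Q).Nondegenerate :=
    hassoc ▸ hp ▸ LinearMap.BilinForm.restrict_orthogonal_nondegenerate hBnd hBsymm.isRefl hBr
  have hwedge (i : Fin n) : ι Q (bb i) * ι Q (dd i) - 1 = wedge Q (bb i) (dd i) := by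
    simp [wedge_eq, hassoc, hdual]
  let D : Module.End ℂ p := (LieAlgebra.ad ℂ g x).restrict fun y hy => hbr ⟨x, hxr⟩ ⟨y, hy⟩
  have hD (y : p) : D y = ∑ i, γ i x • (B (dd i) y • bb i - B (bb i) y • dd i) := by
    refine LinearMap.BilinForm.apply_eq_sum_of_weight_vectors (B := B.restrict p)
      (hBsymm.restrict p) (fun u v => ?_) (fun i => Subtype.ext (hwb x hx i))
      (fun i => Subtype.ext (hwd x hx i)) hdual hbiso hdiso
      (fun z hz => Subtype.ext (hp0 z hz x hx)) hspan.symm y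
    change B ⁅x, (u : g)⁆ v = -B u ⁅x, (v : g)⁆
    rw [← lie_skew, map_neg, LinearMap.neg_apply, hBinv]
  simp only [hwedge, one_div, ← invOf_eq_inv]
  refine eq_of_forall_lie_ι_eq hnd (hν2 _) (equivExterior_smul_sum_wedge_mem Q _ _ _ _)
    fun y => ?_
  rw [← hνdef, lie_invOf_two_smul_sum_wedge_ι, hassoc]
  exact congrArg (ι Q) (hD y)

/-- For `x ∈ h_r`, the spin element `ν_*(x) ∈ ∧²p` equals
`(1/2) Σ_i γ_i(x) b_i ∧ d_i`, where `{b_i}` is a weight basis of `p^+` with weights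
`γ_i` and `{d_i}` the `B`-dual basis of `p^-`.  (Since `B(b_i, d_i) = 1`, the wedge
`b_i ∧ d_i` is the Clifford element `ι b_i * ι d_i - 1`.) -/
theorem stmt14 (g : Type*) [LieRing g] [LieAlgebra ℂ g] [Module.Finite ℂ g]
    [LieAlgebra.IsSemisimple ℂ g]
    (B : LinearMap.BilinForm ℂ g) (hBsymm : B.IsSymm)
    (hBinv : ∀ x y z : g, B ⁅x, y⁆ z = B x ⁅y, z⁆)
    (hBnd : B.Nondegenerate)
    (r : LieSubalgebra ℂ g) (hred : LieAlgebra.IsReductive' ℂ r)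
    (hBr : (B.restrict r.toSubmodule).Nondegenerate)
    (p : Submodule ℂ g) (hp : p = B.orthogonal r.toSubmodule)
    (hbr : ∀ (x : r) (y : p), ⁅(x : g), (y : g)⁆ ∈ p)
    (Q : QuadraticForm ℂ p) (hQ : Q = (B.restrict p).toQuadraticMap)
    -- the Cartan subalgebra `h_r` of `r`, inside `g`:
    (hr : LieSubalgebra ℂ g) (hrr : hr ≤ r)
    -- weight bases `{b_i}` of `p^+` and `{d_i}` of `p^-`, `B`-dual to each other:
    (n : ℕ) (bb dd : Fin n → p) (γ : Fin n → Module.Dual ℂ g)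
    (hwb : ∀ x ∈ hr, ∀ i, ⁅x, (bb i : g)⁆ = γ i x • (bb i : g))
    (hwd : ∀ x ∈ hr, ∀ i, ⁅x, (dd i : g)⁆ = -(γ i x) • (dd i : g))
    (hdual : ∀ i j, B (bb i) (dd j) = if i = j then 1 else 0)
    (hbiso : ∀ i j, B (bb i) (bb j) = 0) (hdiso : ∀ i j, B (dd i) (dd j) = 0)
    -- the rest of `p` is the centralizer `p^0` of `h_r` in `p`:
    (p0 : Submodule ℂ p)
    (hp0 : ∀ z ∈ p0, ∀ x ∈ hr, ⁅x, (z : g)⁆ = 0)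
    (hspan : (⊤ : Submodule ℂ p) =
      Submodule.span ℂ (Set.range bb ∪ Set.range dd) ⊔ p0)
    -- the spin homomorphism `ν_*` characterized by `[x,y] = [ν_*(x), y]`:
    (ν : r →ₗ[ℂ] CliffordAlgebra Q)
    (hν2 : ∀ x : r, equivExterior Q (ν x) ∈
        (LinearMap.range (ExteriorAlgebra.ι ℂ : p →ₗ[ℂ] ExteriorAlgebra ℂ p)) ^ 2)
    (hνdef : ∀ (x : r) (y : p), ι Q ⟨⁅(x : g), (y : g)⁆, hbr x y⟩ = ⁅ν x, ι Q y⁆) :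
    ∀ (x : g) (hxr : x ∈ r), x ∈ hr →
      ν ⟨x, hxr⟩ = (1/2 : ℂ) • ∑ i, γ i x • (ι Q (bb i) * ι Q (dd i) - 1) :=
  stmt14_general g B hBsymm hBinv hBnd r hBr p hp hbr Q hQ hr n bb dd γ hwb hwd hdual hbiso hdiso p0
    hp0 hspan ν hν2 hνdef
end
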